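/- arXiv:0804.1441 — 4 statements merged into one kernel-verified Lean document; each statement's English description precedes it below -/
import Mathlib

section
/- (Low-Rank Representer Theorem.) Let X be a separable real Hilbert space, let φ_1, …, φ_n ∈ X, let d be a positive integer, and let ψ̃_1, …, ψ̃_n ∈ X be linearly independent vectors with span{ψ̃_1, …, ψ̃_n} = span{φ_1, …, φ_n}. Define the coordinate vectors φ̃_i = (⟪φ_i, ψ̃_1⟫, …, ⟪φ_i, ψ̃_n⟫) ∈ ℝ^n. Then for every function f : Matrix (Fin n) (Fin n) ℝ → ℝ, the infimum of f((⟪A φ_i, A φ_j⟫)_{i,j}) over all bounded linear maps A : X → ℝ^d (with ℝ^d carrying the Euclidean inner product) equals the infimum of f((φ̃_i^T (A'^T A') φ̃_j)_{i,j}) over all real d × n matrices A'. -/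
/-!
A bounded map `A : X → ℝ^d` enters only through the vectors `A φ_i`, and every `φ_i` lies in
`V = span ψ`. The coordinate map `T x = (⟪ψ_k, x⟫)_k` is injective on `V`, since a vector of `V`
orthogonal to every `ψ_k` is orthogonal to itself. Hence `A` restricted to `V` factors as `M ∘ T`
for a `d × n` matrix `M`, giving `A φ_i = M φ̃_i`; conversely every matrix `M` yields the bounded
map `M ∘ T`. So both infima run over the same set of Gram matrices, because
`⟪M x, M y⟫ = xᵀ (Mᵀ M) y`.
-/

open scoped RealInnerProductSpace Matrix

open Set Submodule

theorem iInf_comp_eq_iInf_comp_of_range_eq {α β γ δ : Type*} [InfSet δ] (f : γ → δ)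
    {g : α → γ} {h : β → γ} (hgh : range g = range h) : ⨅ a, f (g a) = ⨅ b, f (h b) := by
  rw [← iInf_range', ← iInf_range' f h, hgh]

theorem LinearMap.exists_comp_eqOn_of_ker_domRestrict_eq_bot {K V W U : Type*} [Field K]
    [AddCommGroup V] [Module K V] [AddCommGroup W] [Module K W] [AddCommGroup U] [Module K U]
    {T : V →ₗ[K] W} {p : Submodule K V} (hT : ker (T.domRestrict p) = ⊥) (A : V →ₗ[K] U) :
    ∃ L : W →ₗ[K] U, EqOn (L ∘ₗ T) A p :=
  ⟨A ∘ₗ p.subtype ∘ₗ (T.domRestrict p).leftInverse, fun x hx => by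
    simpa using congrArg (A ∘ p.subtype) (leftInverse_apply_of_inj hT ⟨x, hx⟩)⟩

theorem Matrix.dotProduct_transpose_mul_self_mulVec {m n : Type*} [Fintype m] [Fintype n]
    (M : Matrix m n ℝ) (x y : n → ℝ) :
    x ⬝ᵥ ((Mᵀ * M) *ᵥ y) = ⟪WithLp.toLp 2 (M *ᵥ x), WithLp.toLp 2 (M *ᵥ y)⟫ := by
  rw [EuclideanSpace.inner_toLp_toLp, ← Matrix.mulVec_mulVec, Matrix.dotProduct_mulVec,
    Matrix.vecMul_transpose, star_trivial, dotProduct_comm]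

section InnerCoords

variable (𝕜 : Type*) {E ι : Type*} [RCLike 𝕜] [NormedAddCommGroup E] [InnerProductSpace 𝕜 E]

noncomputable def innerCoords (ψ : ι → E) : E →L[𝕜] ι → 𝕜 :=
  ContinuousLinearMap.pi fun k => innerSL 𝕜 (ψ k)

@[simp]
theorem innerCoords_apply (ψ : ι → E) (x : E) (k : ι) : innerCoords 𝕜 ψ x k = inner 𝕜 (ψ k) x :=
  rfl

variable {𝕜}

theorem ker_innerCoords_domRestrict_span (ψ : ι → E) :
    LinearMap.ker ((innerCoords 𝕜 ψ : E →ₗ[𝕜] ι → 𝕜).domRestrict (span 𝕜 (range ψ))) = ⊥ := by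
  refine LinearMap.ker_eq_bot'.mpr fun ⟨v, hv⟩ hv0 => ?_
  have hψ : span 𝕜 (range ψ) ≤ (𝕜 ∙ v)ᗮ := span_le.mpr <| by
    rintro _ ⟨k, rfl⟩
    exact mem_orthogonal_singleton_iff_inner_left.mpr (by simpa using congrFun hv0 k)
  have hvv : inner 𝕜 v v = 0 := mem_orthogonal_singleton_iff_inner_right.mp (hψ hv)
  exact Subtype.ext (inner_self_eq_zero.mp hvv)

end InnerCoords

section Representer

variable {𝕜 X ι κ m : Type*} [RCLike 𝕜] [NormedAddCommGroup X] [InnerProductSpace 𝕜 X]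
  [Fintype ι] [DecidableEq ι]

theorem exists_matrix_toLp_mulVec_innerCoords_eqOn (ψ : ι → X) (A : X →ₗ[𝕜] EuclideanSpace 𝕜 m) :
    ∃ M : Matrix m ι 𝕜, EqOn (fun x => WithLp.toLp 2 (M *ᵥ innerCoords 𝕜 ψ x)) A
      (span 𝕜 (range ψ)) := by
  obtain ⟨L, hL⟩ := LinearMap.exists_comp_eqOn_of_ker_domRestrict_eq_bot
    (ker_innerCoords_domRestrict_span ψ) A
  refine ⟨LinearMap.toMatrix' ((WithLp.linearEquiv 2 𝕜 (m → 𝕜)).toLinearMap ∘ₗ L), fun x hx => ?_⟩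
  simpa [LinearMap.toMatrix'_mulVec] using hL hx

theorem exists_continuousLinearMap_eq_toLp_mulVec_innerCoords (ψ : ι → X) (M : Matrix m ι 𝕜) :
    ∃ A : X →L[𝕜] EuclideanSpace 𝕜 m, ∀ x, A x = WithLp.toLp 2 (M *ᵥ innerCoords 𝕜 ψ x) :=
  ⟨(EuclideanSpace.equiv m 𝕜).symm.toContinuousLinearMap ∘L
    LinearMap.toContinuousLinearMap (Matrix.toLin' M) ∘L innerCoords 𝕜 ψ, fun _ => rfl⟩

theorem range_comp_continuousLinearMap_eq_range_toLp_mulVec_innerCoords {φ : κ → X} {ψ : ι → X}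
    (hspan : span 𝕜 (range φ) ≤ span 𝕜 (range ψ)) :
    range (fun (A : X →L[𝕜] EuclideanSpace 𝕜 m) i => A (φ i)) =
      range (fun (M : Matrix m ι 𝕜) i => WithLp.toLp 2 (M *ᵥ innerCoords 𝕜 ψ (φ i))) := by
  refine (range_subset_iff.mpr fun A => ?_).antisymm (range_subset_iff.mpr fun M => ?_)
  · obtain ⟨M, hM⟩ := exists_matrix_toLp_mulVec_innerCoords_eqOn ψ A.toLinearMap
    exact ⟨M, funext fun i => hM (hspan (subset_span ⟨i, rfl⟩))⟩
  · obtain ⟨A, hA⟩ := exists_continuousLinearMap_eq_toLp_mulVec_innerCoords ψ M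
    exact ⟨A, funext fun i => hA (φ i)⟩

end Representer

theorem stmt3_general {X : Type*}
    [NormedAddCommGroup X] [InnerProductSpace ℝ X]
    {n d : ℕ} (φ ψ : Fin n → X)
    (hspan : Submodule.span ℝ (Set.range ψ) = Submodule.span ℝ (Set.range φ))
    (φt : Fin n → Fin n → ℝ) (hφt : ∀ i k, φt i k = ⟪φ i, ψ k⟫)
    (f : Matrix (Fin n) (Fin n) ℝ → ℝ) :
    ⨅ A : X →L[ℝ] EuclideanSpace ℝ (Fin d),
        f (Matrix.of fun i j => ⟪A (φ i), A (φ j)⟫) =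
      ⨅ A' : Matrix (Fin d) (Fin n) ℝ,
        f (Matrix.of fun i j => φt i ⬝ᵥ ((A'ᵀ * A') *ᵥ φt j)) := by
  obtain rfl : φt = fun i => innerCoords ℝ ψ (φ i) :=
    funext fun i => funext fun k => (hφt i k).trans (real_inner_comm _ _)
  simp only [Matrix.dotProduct_transpose_mul_self_mulVec]
  exact iInf_comp_eq_iInf_comp_of_range_eq (fun v => f (Matrix.gram ℝ v))
    (range_comp_continuousLinearMap_eq_range_toLp_mulVec_innerCoords hspan.ge)

/-- Low-Rank Representer Theorem. -/
theorem stmt3 {X : Type*}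
    [NormedAddCommGroup X] [InnerProductSpace ℝ X] [CompleteSpace X]
    [TopologicalSpace.SeparableSpace X]
    {n d : ℕ} (hd : 0 < d) (φ ψ : Fin n → X)
    (hind : LinearIndependent ℝ ψ)
    (hspan : Submodule.span ℝ (Set.range ψ) = Submodule.span ℝ (Set.range φ))
    (φt : Fin n → Fin n → ℝ) (hφt : ∀ i k, φt i k = ⟪φ i, ψ k⟫)
    (f : Matrix (Fin n) (Fin n) ℝ → ℝ) :
    ⨅ A : X →L[ℝ] EuclideanSpace ℝ (Fin d),
        f (Matrix.of fun i j => ⟪A (φ i), A (φ j)⟫) =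
      ⨅ A' : Matrix (Fin d) (Fin n) ℝ,
        f (Matrix.of fun i j => φt i ⬝ᵥ ((A'ᵀ * A') *ᵥ φt j)) :=
  stmt3_general φ ψ hspan φt hφt f
end

section
/- (Strong Representer Theorem.) Let X be a real Hilbert space, let φ_1, …, φ_n ∈ X, and let ψ̃_1, …, ψ̃_n ∈ X satisfy span{ψ̃_1, …, ψ̃_n} = span{φ_1, …, φ_n}. Let d be a positive integer, let f : Matrix (Fin d) (Fin n) ℝ → ℝ be any function, and let g_1, …, g_d : ℝ → ℝ be strictly monotonically increasing functions. Define h(τ_1, …, τ_d) = f((⟪τ_i, φ_j⟫)_{i,j}) + ∑_{i=1}^d g_i(‖τ_i‖) for τ_1, …, τ_d ∈ X. Then any minimizer (τ_1, …, τ_d) of h over X^d satisfies τ_i ∈ span{ψ̃_1, …, ψ̃_n} for every i = 1, …, d; that is, each optimal τ_i admits a representation τ_i = ∑_{j=1}^n u_{ij} ψ̃_j with real coefficients u_{ij}. -/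
/-!
Projecting every component of `τ` orthogonally onto `span φ` leaves all the inner products
`⟪τ i, φ j⟫`, hence the `f`-term, unchanged, and shrinks the norm of every component not already
in the span strictly. Since each `g i` is strictly increasing, a minimizer must therefore have all
its components in `span φ = span ψ`.
-/

open scoped RealInnerProductSpace

namespace Submodule

variable {E : Type*} [NormedAddCommGroup E] [InnerProductSpace ℝ E]
  (K : Submodule ℝ E) [K.HasOrthogonalProjection]

theorem norm_starProjection_lt_of_notMem {v : E} (hv : v ∉ K) : ‖K.starProjection v‖ < ‖v‖ :=
  (K.norm_starProjection_apply_le v).lt_of_ne (mt (K.mem_iff_norm_starProjection v).2 hv)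

theorem inner_starProjection_left_of_mem (v : E) {w : E} (hw : w ∈ K) :
    ⟪K.starProjection v, w⟫ = ⟪v, w⟫ := by
  rw [inner_starProjection_left_eq_right, K.starProjection_eq_self_iff.2 hw]

theorem sum_norm_starProjection_lt {ι : Type*} [Fintype ι] {g : ι → ℝ → ℝ}
    (hg : ∀ k, StrictMono (g k)) {τ : ι → E} {i : ι} (hi : τ i ∉ K) :
    ∑ k, g k ‖K.starProjection (τ k)‖ < ∑ k, g k ‖τ k‖ :=
  Finset.sum_lt_sum (fun k _ => (hg k).monotone (K.norm_starProjection_apply_le (τ k)))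
    ⟨i, Finset.mem_univ i, hg i (K.norm_starProjection_lt_of_notMem hi)⟩

end Submodule

theorem stmt5_general {X : Type*}
    [NormedAddCommGroup X] [InnerProductSpace ℝ X]
    {n d : ℕ} (φ ψ : Fin n → X)
    (hspan : Submodule.span ℝ (Set.range ψ) = Submodule.span ℝ (Set.range φ))
    (f : Matrix (Fin d) (Fin n) ℝ → ℝ)
    (g : Fin d → ℝ → ℝ) (hg : ∀ i, StrictMono (g i))
    (h : (Fin d → X) → ℝ)
    (hh : ∀ τ : Fin d → X,
      h τ = f (Matrix.of fun i j => ⟪τ i, φ j⟫) + ∑ i : Fin d, g i ‖τ i‖)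
    (τ : Fin d → X) (hmin : ∀ τ' : Fin d → X, h τ ≤ h τ') :
    ∀ i : Fin d, τ i ∈ Submodule.span ℝ (Set.range ψ) := by
  intro i
  rw [hspan]
  set K := Submodule.span ℝ (Set.range φ)
  have : FiniteDimensional ℝ K := FiniteDimensional.span_of_finite ℝ (Set.finite_range φ)
  by_contra hi
  have hgram : (Matrix.of fun k j => ⟪K.starProjection (τ k), φ j⟫) =
      Matrix.of fun k j => ⟪τ k, φ j⟫ := by
    ext k j
    exact K.inner_starProjection_left_of_mem (τ k) (Submodule.subset_span ⟨j, rfl⟩)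
  have hle := hmin fun k => K.starProjection (τ k)
  rw [hh, hh, hgram] at hle
  linarith [K.sum_norm_starProjection_lt hg hi]

/-- Strong Representer Theorem: any minimizer of the regularized objective has each
component in the span of `ψ̃_1, …, ψ̃_n`. -/
theorem stmt5 {X : Type*}
    [NormedAddCommGroup X] [InnerProductSpace ℝ X] [CompleteSpace X]
    {n d : ℕ} (hd : 0 < d) (φ ψ : Fin n → X)
    (hspan : Submodule.span ℝ (Set.range ψ) = Submodule.span ℝ (Set.range φ))
    (f : Matrix (Fin d) (Fin n) ℝ → ℝ)
    (g : Fin d → ℝ → ℝ) (hg : ∀ i, StrictMono (g i))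
    (h : (Fin d → X) → ℝ)
    (hh : ∀ τ : Fin d → X,
      h τ = f (Matrix.of fun i j => ⟪τ i, φ j⟫) + ∑ i : Fin d, g i ‖τ i‖)
    (τ : Fin d → X) (hmin : ∀ τ' : Fin d → X, h τ ≤ h τ') :
    ∀ i : Fin d, τ i ∈ Submodule.span ℝ (Set.range ψ) :=
  stmt5_general φ ψ hspan f g hg h hh τ hmin
end

section
/- Let Y and K_1, …, K_m be real n × n matrices with Y ≠ 0, and for α ∈ ℝ^m with α_i ≥ 0 write K(α) = ∑_{i=1}^m α_i K_i. Let S be the m × m matrix with S_{ij} = ⟨K_i, K_j⟩_F and b ∈ ℝ^m with b_i = ⟨K_i, Y⟩_F. Then for every feasible α (i.e. α_i ≥ 0 for all i and α^T b = ⟨K(α), Y⟩_F = 1), the alignment satisfies align(K(α), Y) = 1 / (√(α^T S α) · ‖Y‖_F), and α^T S α = ‖K(α)‖_F² > 0. Consequently, over the feasible set, α maximizes align(K(α), Y) if and only if α minimizes α^T S α. -/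
open scoped Matrix

/-- Frobenius inner product of real `n × n` matrices. -/
def frobInner {n : ℕ} (A B : Matrix (Fin n) (Fin n) ℝ) : ℝ :=
  Matrix.trace (Aᵀ * B)

/-- Frobenius norm of a real `n × n` matrix. -/
noncomputable def frobNorm {n : ℕ} (A : Matrix (Fin n) (Fin n) ℝ) : ℝ :=
  Real.sqrt (frobInner A A)

/-- Kernel alignment of two matrices. -/
noncomputable def align {n : ℕ} (K Y : Matrix (Fin n) (Fin n) ℝ) : ℝ :=
  frobInner K Y / (frobNorm K * frobNorm Y)

lemma frobInner_eq_sum {n : ℕ} (A B : Matrix (Fin n) (Fin n) ℝ) :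
    frobInner A B = ∑ j, ∑ i, A i j * B i j := by
  simp [frobInner, Matrix.trace, Matrix.mul_apply, Matrix.diag]

lemma frobInner_sum_smul_left {n m : ℕ} (α : Fin m → ℝ) (K : Fin m → Matrix (Fin n) (Fin n) ℝ)
    (B : Matrix (Fin n) (Fin n) ℝ) :
    frobInner (∑ i, α i • K i) B = ∑ i, α i * frobInner (K i) B := by
  simp [frobInner, Matrix.transpose_sum, Matrix.sum_mul, Matrix.transpose_smul,
    Matrix.smul_mul, Matrix.trace_sum, Matrix.trace_smul, smul_eq_mul]

lemma frobInner_comm {n : ℕ} (A B : Matrix (Fin n) (Fin n) ℝ) :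
    frobInner A B = frobInner B A := by
  simp [frobInner_eq_sum, mul_comm]

lemma frobInner_sum_smul_right {n m : ℕ} (α : Fin m → ℝ) (K : Fin m → Matrix (Fin n) (Fin n) ℝ)
    (B : Matrix (Fin n) (Fin n) ℝ) :
    frobInner B (∑ i, α i • K i) = ∑ i, α i * frobInner B (K i) := by
  rw [frobInner_comm, frobInner_sum_smul_left]
  simp [frobInner_comm]

lemma frobInner_self_nonneg {n : ℕ} (A : Matrix (Fin n) (Fin n) ℝ) :
    0 ≤ frobInner A A := by
  rw [frobInner_eq_sum]
  exact Finset.sum_nonneg fun j _ => Finset.sum_nonneg fun i _ => mul_self_nonneg _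

lemma frobInner_self_eq_zero {n : ℕ} (A : Matrix (Fin n) (Fin n) ℝ) :
    frobInner A A = 0 ↔ A = 0 := by
  rw [frobInner_eq_sum]
  constructor
  · intro h
    ext i j
    have h1 := (Finset.sum_eq_zero_iff_of_nonneg
      (fun j _ => Finset.sum_nonneg fun i _ => mul_self_nonneg _)).1 h j (by simp)
    have h2 := (Finset.sum_eq_zero_iff_of_nonneg (fun i _ => mul_self_nonneg _)).1 h1 i (by simp)
    simpa [mul_self_eq_zero] using h2
  · intro h; simp [h]

/-- On the feasible set `{α : α ≥ 0, ⟨K(α), Y⟩_F = 1}`, the alignment equals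
`1 / (√(αᵀSα) ‖Y‖_F)` with `αᵀSα = ‖K(α)‖_F² > 0`; hence maximizing the alignment is
equivalent to minimizing `αᵀSα`. -/
theorem stmt14 {n m : ℕ}
    (Y : Matrix (Fin n) (Fin n) ℝ) (hY : Y ≠ 0)
    (K : Fin m → Matrix (Fin n) (Fin n) ℝ)
    (Kmat : (Fin m → ℝ) → Matrix (Fin n) (Fin n) ℝ)
    (hKmat : ∀ α, Kmat α = ∑ i : Fin m, α i • K i)
    (S : Matrix (Fin m) (Fin m) ℝ) (hS : ∀ i j, S i j = frobInner (K i) (K j))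
    (b : Fin m → ℝ) (hb : ∀ i, b i = frobInner (K i) Y)
    (feasible : (Fin m → ℝ) → Prop)
    (hfeas : ∀ α, feasible α ↔ ((∀ i, 0 ≤ α i) ∧ α ⬝ᵥ b = 1)) :
    ∀ α, feasible α →
      (frobInner (Kmat α) Y = 1 ∧
       align (Kmat α) Y = 1 / (Real.sqrt (α ⬝ᵥ (S *ᵥ α)) * frobNorm Y) ∧
       α ⬝ᵥ (S *ᵥ α) = frobNorm (Kmat α) ^ 2 ∧
       0 < α ⬝ᵥ (S *ᵥ α) ∧
       ((∀ β, feasible β → align (Kmat β) Y ≤ align (Kmat α) Y) ↔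
        (∀ β, feasible β → α ⬝ᵥ (S *ᵥ α) ≤ β ⬝ᵥ (S *ᵥ β)))) := by
  have hYpos : 0 < frobNorm Y := by
    rw [frobNorm]
    apply Real.sqrt_pos.2
    rcases (frobInner_self_nonneg Y).lt_or_eq with h | h
    · exact h
    · exact absurd ((frobInner_self_eq_zero Y).1 h.symm) hY
  have key : ∀ γ : Fin m → ℝ, feasible γ →
      frobInner (Kmat γ) Y = 1 ∧ γ ⬝ᵥ (S *ᵥ γ) = frobInner (Kmat γ) (Kmat γ) ∧
      0 < γ ⬝ᵥ (S *ᵥ γ) ∧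
      align (Kmat γ) Y = 1 / (Real.sqrt (γ ⬝ᵥ (S *ᵥ γ)) * frobNorm Y) := by
    intro γ hγ
    obtain ⟨-, hsum⟩ := (hfeas γ).1 hγ
    have h1 : frobInner (Kmat γ) Y = 1 := by
      rw [hKmat, frobInner_sum_smul_left, ← hsum]
      simp [dotProduct, hb]
    have hq : γ ⬝ᵥ (S *ᵥ γ) = frobInner (Kmat γ) (Kmat γ) := by
      rw [hKmat, frobInner_sum_smul_left]
      simp only [frobInner_sum_smul_right]
      simp only [dotProduct, Matrix.mulVec, hS]
      refine Finset.sum_congr rfl fun i _ => ?_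
      rw [Finset.mul_sum, Finset.mul_sum]
      exact Finset.sum_congr rfl fun j _ => by ring
    have hpos : 0 < γ ⬝ᵥ (S *ᵥ γ) := by
      rw [hq]
      rcases (frobInner_self_nonneg (Kmat γ)).lt_or_eq with h | h
      · exact h
      · exfalso
        have h0 : Kmat γ = 0 := (frobInner_self_eq_zero _).1 h.symm
        rw [h0] at h1
        simp [frobInner_eq_sum] at h1
    refine ⟨h1, hq, hpos, ?_⟩
    rw [align, h1, frobNorm, hq]
  intro α hα
  obtain ⟨h1, hq, hpos, halign⟩ := key α hα
  refine ⟨h1, halign, ?_, hpos, ?_⟩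
  · rw [hq, frobNorm, Real.sq_sqrt (frobInner_self_nonneg _)]
  · constructor
    · intro h β hβ
      obtain ⟨-, -, hposβ, halβ⟩ := key β hβ
      have hle := h β hβ
      rw [halβ, halign] at hle
      have hsa := Real.sqrt_pos.2 hpos
      have hsb := Real.sqrt_pos.2 hposβ
      have h2 : Real.sqrt (α ⬝ᵥ (S *ᵥ α)) ≤ Real.sqrt (β ⬝ᵥ (S *ᵥ β)) := by
        have h3 := (one_div_le_one_div (by positivity) (by positivity)).1 hle
        exact le_of_mul_le_mul_right h3 hYpos
      calc α ⬝ᵥ (S *ᵥ α) = Real.sqrt (α ⬝ᵥ (S *ᵥ α)) * Real.sqrt (α ⬝ᵥ (S *ᵥ α)) :=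
            (Real.mul_self_sqrt hpos.le).symm
        _ ≤ Real.sqrt (β ⬝ᵥ (S *ᵥ β)) * Real.sqrt (β ⬝ᵥ (S *ᵥ β)) :=
            mul_self_le_mul_self hsa.le h2
        _ = β ⬝ᵥ (S *ᵥ β) := Real.mul_self_sqrt hposβ.le
    · intro h β hβ
      obtain ⟨-, -, hposβ, halβ⟩ := key β hβ
      rw [halβ, halign]
      have hsa := Real.sqrt_pos.2 hpos
      have h2 : Real.sqrt (α ⬝ᵥ (S *ᵥ α)) ≤ Real.sqrt (β ⬝ᵥ (S *ᵥ β)) :=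
        Real.sqrt_le_sqrt (h β hβ)
      exact one_div_le_one_div_of_le (by positivity)
        (mul_le_mul_of_nonneg_right h2 hYpos.le)
end

section
/- Let p ≥ 2 and let y_1, …, y_n be class labels taking values in a set of p classes. Define the ideal kernel matrix Y ∈ ℝ^{n × n} by Y_{ij} = 1 if y_i = y_j and Y_{ij} = −1/(p − 1) otherwise. Then Y is symmetric positive semidefinite. -/
/-!
Let `C` be the one-hot label matrix with each entry shifted by `-1/p`, i.e. `C i k = [y i = k] - 1/p`.
Since every row of the one-hot matrix sums to one, `(C Cᵀ) i j = [y i = y j] - 1/p`, and rescaling by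
`p / (p - 1)` turns this into the ideal kernel. A nonnegative multiple of a Gram matrix is positive
semidefinite.
-/

open scoped Matrix

namespace Matrix

variable {ι κ : Type*} [Fintype κ] [DecidableEq κ]

noncomputable def centeredOneHot (y : ι → κ) : Matrix ι κ ℝ :=
  of fun i k => (if y i = k then 1 else 0) - 1 / (Fintype.card κ : ℝ)

theorem centeredOneHot_mul_transpose_apply (y : ι → κ) (i j : ι) :
    (centeredOneHot y * (centeredOneHot y)ᵀ) i j =
      (if y i = y j then 1 else 0) - 1 / (Fintype.card κ : ℝ) := by
  have hcard : (Fintype.card κ : ℝ) ≠ 0 := by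
    have : Nonempty κ := ⟨y i⟩
    positivity
  simp only [mul_apply, transpose_apply, centeredOneHot, of_apply, sub_mul, mul_sub,
    Finset.sum_sub_distrib, ite_mul, one_mul, zero_mul, mul_ite, mul_one, mul_zero,
    Finset.sum_ite_eq, Finset.mem_univ, if_true, Finset.sum_const,
    Finset.card_univ, nsmul_eq_mul]
  split_ifs <;> field_simp <;> ring

end Matrix

open Matrix in
/-- The ideal kernel matrix `Y_{ij} = 1` if `y_i = y_j` and `Y_{ij} = −1/(p−1)`
otherwise, built from class labels `y : Fin n → Fin p` with `p ≥ 2`, is symmetric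
positive semidefinite. -/
theorem stmt17 {n p : ℕ} (hp : 2 ≤ p) (y : Fin n → Fin p) :
    Matrix.PosSemidef
      (Matrix.of fun i j : Fin n =>
        if y i = y j then (1 : ℝ) else -1 / ((p : ℝ) - 1)) := by
  have hp' : (2 : ℝ) ≤ p := by exact_mod_cast hp
  have hkernel : (of fun i j : Fin n => if y i = y j then (1 : ℝ) else -1 / ((p : ℝ) - 1)) =
      ((p : ℝ) / (p - 1)) • (centeredOneHot y * (centeredOneHot y)ᴴ) := by
    ext i j
    rw [conjTranspose_eq_transpose_of_trivial, Matrix.smul_apply, smul_eq_mul,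
      centeredOneHot_mul_transpose_apply, Fintype.card_fin, of_apply]
    have hp1 : (p : ℝ) - 1 ≠ 0 := by linarith
    have hp0 : (p : ℝ) ≠ 0 := by positivity
    split_ifs
    · field_simp
    · field_simp
      ring
  rw [hkernel]
  exact (posSemidef_self_mul_conjTranspose _).smul (div_nonneg (by positivity) (by linarith))
end
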